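/- Let Q be an abstract key polynomial for w with w_Q < w. Then every F ∈ Φ(w_Q, w) is an abstract key polynomial for w, and δ(Q) < δ(F). -/

import Mathlib

namespace MLV

open Polynomial

/-- An additive valuation on a commutative ring `R` with values in `Γ ∪ {∞}`
(written additively, with the `min` convention), thought of as the restriction
to `R` of a valuation on its fraction field. -/
structure ValOn (R : Type*) [CommRing R] (Γ : Type*) [AddCommGroup Γ] [LinearOrder Γ] [IsOrderedAddMonoid Γ] where
  toFun : R → WithTop Γ
  map_zero' : toFun 0 = ⊤
  ne_top' : ∀ f : R, f ≠ 0 → toFun f ≠ ⊤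
  map_mul' : ∀ f g : R, toFun (f * g) = toFun f + toFun g
  add_min' : ∀ f g : R, min (toFun f) (toFun g) ≤ toFun (f + g)

variable {K : Type*} [Field K] {Γ : Type*} [AddCommGroup Γ] [LinearOrder Γ] [IsOrderedAddMonoid Γ]

/-- `w` (a valuation on `K(X)`, restricted to `K[X]`) extends the valuation `v` of `K`. -/
def Extends (w : ValOn (Polynomial K) Γ) (v : ValOn K Γ) : Prop :=
  ∀ c : K, w.toFun (C c) = v.toFun c

/-- `wbar` (a valuation on `K̄(X)`) is a common extension of `w` and of `vbar`. -/
def IsCommonExt {L : Type*} [Field L] [Algebra K L]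
    (wbar : ValOn (Polynomial L) Γ) (w : ValOn (Polynomial K) Γ) (vbar : ValOn L Γ) : Prop :=
  (∀ f : Polynomial K, wbar.toFun (f.map (algebraMap K L)) = w.toFun f) ∧
  (∀ c : L, wbar.toFun (C c) = vbar.toFun c)

/-- `δ(f) = max { w̄(X - α) : α ∈ K̄, f(α) = 0 }` (as an element of `WithBot (WithTop Γ)`,
the value `⊥` corresponding to a polynomial without roots). -/
noncomputable def delta {L : Type*} [Field L] [Algebra K L]
    (wbar : ValOn (Polynomial L) Γ) (f : Polynomial K) : WithBot (WithTop Γ) :=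
  (((f.map (algebraMap K L)).roots).map
    fun α => ((wbar.toFun (X - C α) : WithTop Γ) : WithBot (WithTop Γ))).sup

/-- `Q` is an abstract key polynomial for `w` (with respect to the common extension `wbar`
computing `δ`): `Q` is monic and `δ(f) < δ(Q)` for every nonzero `f` with `deg f < deg Q`. -/
def IsABKP {L : Type*} [Field L] [Algebra K L]
    (wbar : ValOn (Polynomial L) Γ) (Q : Polynomial K) : Prop :=
  Q.Monic ∧ ∀ f : Polynomial K, f ≠ 0 → f.degree < Q.degree → delta wbar f < delta wbar Q

/-- The `Q`-truncation `w_Q` of `w`: on the `Q`-expansion `f = ∑ fᵢ Qⁱ` it equals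
`min_i w(fᵢ Qⁱ)`. -/
noncomputable def truncVal (w : ValOn (Polynomial K) Γ) (Q f : Polynomial K) : WithTop Γ :=
  (Finset.range (f.natDegree + 1)).inf fun i => w.toFun ((f /ₘ Q ^ i) %ₘ Q * Q ^ i)

/-- `f ∼_u g` : `u(f - g) > u f = u g`. -/
def EquivMod (u : Polynomial K → WithTop Γ) (f g : Polynomial K) : Prop :=
  u f < u (f - g) ∧ u f = u g

/-- `f ∣_u g` : `g ∼_u f h` for some `h`. -/
def DvdMod (u : Polynomial K → WithTop Γ) (f g : Polynomial K) : Prop :=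
  ∃ h : Polynomial K, EquivMod u g (f * h)

/-- A key polynomial for `u`: monic, `u`-irreducible and `u`-minimal. -/
def IsKeyPol (u : Polynomial K → WithTop Γ) (φ : Polynomial K) : Prop :=
  φ.Monic ∧
  (∀ h q : Polynomial K, DvdMod u φ (h * q) → DvdMod u φ h ∨ DvdMod u φ q) ∧
  (∀ h : Polynomial K, h ≠ 0 → DvdMod u φ h → φ.degree ≤ h.degree)

/-- A key polynomial for `u` of minimal degree (i.e. of degree `deg(u)`). -/
def IsMinKeyPol (u : Polynomial K → WithTop Γ) (φ : Polynomial K) : Prop :=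
  IsKeyPol u φ ∧ ∀ ψ : Polynomial K, IsKeyPol u ψ → φ.degree ≤ ψ.degree

/-- `u ≤ u'` pointwise on `K[X]`. -/
def FnLe (u u' : Polynomial K → WithTop Γ) : Prop :=
  ∀ f : Polynomial K, u f ≤ u' f

/-- `u < u'` : `u ≤ u'` and `u f < u' f` for some `f`. -/
def FnLt (u u' : Polynomial K → WithTop Γ) : Prop :=
  FnLe u u' ∧ ∃ f : Polynomial K, u f < u' f

/-- `g ∈ Φ(u, u')` : `g` is monic of minimal degree with `u g < u' g`. -/
def InPhi (u u' : Polynomial K → WithTop Γ) (g : Polynomial K) : Prop :=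
  g.Monic ∧ u g < u' g ∧
  ∀ h : Polynomial K, h.Monic → u h < u' h → g.degree ≤ h.degree

/-- The value at `f` of the augmented valuation `[u; φ, γ]`, computed via the
`φ`-expansion `f = ∑ fᵢ φⁱ` as `min_i (u fᵢ + i γ)`. -/
noncomputable def augVal (u : Polynomial K → WithTop Γ) (φ : Polynomial K) (γ : Γ)
    (f : Polynomial K) : WithTop Γ :=
  (Finset.range (f.natDegree + 1)).inf
    fun i => u ((f /ₘ φ ^ i) %ₘ φ) + i • ((γ : WithTop Γ))

/-- `u' = [u; φ, γ]` is the ordinary augmentation of `u` at the key polynomial `φ`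
with value `γ > u φ`. -/
def IsOrdAug (u : Polynomial K → WithTop Γ) (φ : Polynomial K) (γ : Γ)
    (u' : Polynomial K → WithTop Γ) : Prop :=
  IsKeyPol u φ ∧ u φ < (γ : WithTop Γ) ∧ ∀ f : Polynomial K, u' f = augVal u φ γ f

/-- A continuous family of augmentations `(ρ_i = [w'; χ_i, γ_i])_{i ∈ ι}` of `w'`. -/
structure ContFamily (w' : ValOn (Polynomial K) Γ) (ι : Type*) [LinearOrder ι] where
  chi : ι → Polynomial K
  gam : ι → Γ
  rho : ι → ValOn (Polynomial K) Γ
  no_last : ∀ i : ι, ∃ j : ι, i < j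
  gam_mono : StrictMono gam
  aug : ∀ i : ι, IsOrdAug w'.toFun (chi i) (gam i) (rho i).toFun
  deg_eq : ∀ i j : ι, (chi i).degree = (chi j).degree
  key_step : ∀ i j : ι, i < j → IsKeyPol (rho i).toFun (chi j)
  not_equiv : ∀ i j : ι, i < j → ¬ EquivMod (rho i).toFun (chi j) (chi i)
  step : ∀ i j : ι, i < j → IsOrdAug (rho i).toFun (chi j) (gam j) (rho j).toFun

/-- `f` is `W`-stable with stable value `c`. -/
def StableAt {w' : ValOn (Polynomial K) Γ} {ι : Type*} [LinearOrder ι]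
    (F : ContFamily w' ι) (f : Polynomial K) (c : WithTop Γ) : Prop :=
  ∃ i0 : ι, ∀ i : ι, i0 ≤ i → (F.rho i).toFun f = c

/-- `f` is `W`-stable. -/
def IsStable {w' : ValOn (Polynomial K) Γ} {ι : Type*} [LinearOrder ι]
    (F : ContFamily w' ι) (f : Polynomial K) : Prop :=
  ∃ c : WithTop Γ, StableAt F f c

/-- The valuation `w` is the stable limit of the family `F`. -/
def IsStableLimit {w' : ValOn (Polynomial K) Γ} {ι : Type*} [LinearOrder ι]
    (F : ContFamily w' ι) (w : ValOn (Polynomial K) Γ) : Prop :=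
  ∀ f : Polynomial K, StableAt F f (w.toFun f)

/-- `Q` is a MacLane–Vaquié limit key polynomial for `F`: monic, `F`-unstable,
of minimal degree among unstable polynomials. -/
def IsLimitKP {w' : ValOn (Polynomial K) Γ} {ι : Type*} [LinearOrder ι]
    (F : ContFamily w' ι) (Q : Polynomial K) : Prop :=
  Q.Monic ∧ ¬ IsStable F Q ∧ ∀ g : Polynomial K, ¬ IsStable F g → Q.degree ≤ g.degree

/-- The continuous family `F` is essential: `deg(W) < m_∞ < ∞`. -/
def IsEssential {w' : ValOn (Polynomial K) Γ} {ι : Type*} [LinearOrder ι]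
    (F : ContFamily w' ι) : Prop :=
  (∃ f : Polynomial K, ¬ IsStable F f) ∧
  ∀ (i : ι) (f : Polynomial K), ¬ IsStable F f → (F.chi i).degree < f.degree

/-- `w = [F; Q, γ]` is the limit augmentation of the family `F` at the limit key
polynomial `Q` with value `γ`: on `Q`-expansions, `w f = min_i (ρ_W(fᵢ) + iγ)`, which
since the coefficients are stable is the eventual value of `[ρ_i; Q, γ]` on `f`. -/
def IsLimitAug {w' : ValOn (Polynomial K) Γ} {ι : Type*} [LinearOrder ι]
    (F : ContFamily w' ι) (Q : Polynomial K) (γ : Γ)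
    (w : ValOn (Polynomial K) Γ) : Prop :=
  IsLimitKP F Q ∧ (∀ i : ι, (F.rho i).toFun Q < (γ : WithTop Γ)) ∧
  ∀ f : Polynomial K, ∃ i0 : ι, ∀ i : ι, i0 ≤ i → w.toFun f = augVal (F.rho i).toFun Q γ f

/-- `w` is a depth-zero valuation `w_{α,δ}` over `v`. -/
def IsDepthZero (v : ValOn K Γ) (w : ValOn (Polynomial K) Γ) : Prop :=
  ∃ (α : K) (d : Γ), ∀ f : Polynomial K,
    w.toFun f = (Finset.range (f.natDegree + 1)).inf
      fun i => v.toFun (((Polynomial.taylor α) f).coeff i) + i • ((d : WithTop Γ))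

/-- An ordinary augmentation step of a MacLane–Vaquié chain:
`u' = [u; φ, γ]` with `deg(u) < deg Φ(u, u')`. -/
def OrdMLVStep (u u' : Polynomial K → WithTop Γ) (φ : Polynomial K) (γ : Γ) : Prop :=
  IsOrdAug u φ γ u' ∧
  ∀ ψ g : Polynomial K, IsMinKeyPol u ψ → InPhi u u' g → ψ.degree < g.degree

/-- A limit augmentation step of a MacLane–Vaquié chain, with the underlying essential
continuous family `F` made explicit: `w = [F; φ, γ]`, `deg(w') = deg Φ(w', w)` and
`φprev ∉ Φ(w', w)`. -/
def LimMLVStepWith {w' : ValOn (Polynomial K) Γ} {ι : Type*} [LinearOrder ι]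
    (F : ContFamily w' ι) (w : ValOn (Polynomial K) Γ)
    (φprev φ : Polynomial K) (γ : Γ) : Prop :=
  IsEssential F ∧ IsLimitAug F φ γ w ∧
  (∀ ψ g : Polynomial K, IsMinKeyPol w'.toFun ψ → InPhi w'.toFun w.toFun g →
    ψ.degree = g.degree) ∧
  ¬ InPhi w'.toFun w.toFun φprev

/-- A limit augmentation step of a MacLane–Vaquié chain (the underlying essential
continuous family being existentially quantified). -/
def LimMLVStep (w' w : ValOn (Polynomial K) Γ) (φprev φ : Polynomial K) (γ : Γ) : Prop :=
  ∃ (ι : Type) (li : LinearOrder ι) (F : @ContFamily K _ Γ _ _ _ w' ι li),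
    @LimMLVStepWith K _ Γ _ _ _ w' ι li F w φprev φ γ

/-- Membership in the index set `I`: `I = ℕ` if `o = none`, and `I = {0, …, N}`
if `o = some N`. -/
def InIdx (o : Option ℕ) (j : ℕ) : Prop :=
  ∀ N : ℕ, o = some N → j ≤ N

/-- An induced complete sequence `{Q_i}_{i ∈ Δ}` of abstract key polynomials for `w`:
a complete sequence of ABKPs, organized in blocks `Δ_j = {j} ∪ ϑ_j` (for `j` in
`I = {0,…,N}` or `I = ℕ`), satisfying the properties of Remark 1.3.  Here `blk i`
is the block of an index `i ∈ Δ`, `main j ∈ Δ` is the distinguished first element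
of the block `Δ_j`, and `ϑ_j = {i ∈ Δ | blk i = j, i ≠ main j}`. -/
structure ICS {L : Type*} [Field L] [Algebra K L]
    (wbar : ValOn (Polynomial L) Γ) (w : ValOn (Polynomial K) Γ)
    (Δ : Type*) [LinearOrder Δ] where
  Q : Δ → Polynomial K
  abkp : ∀ i : Δ, IsABKP wbar (Q i)
  wf : WellFoundedLT Δ
  delta_mono : ∀ i i' : Δ, i < i' → delta wbar (Q i) < delta wbar (Q i')
  wval_mono : ∀ i i' : Δ, i < i' → w.toFun (Q i) < w.toFun (Q i')
  complete : ∀ f : Polynomial K, f ≠ 0 →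
    ∃ i : Δ, (Q i).degree ≤ f.degree ∧ truncVal w (Q i) f = w.toFun f
  Ifin : Option ℕ
  blk : Δ → ℕ
  main : ℕ → Δ
  blk_mono : ∀ i i' : Δ, i ≤ i' → blk i ≤ blk i'
  blk_mem : ∀ i : Δ, InIdx Ifin (blk i)
  blk_main : ∀ j : ℕ, InIdx Ifin j → blk (main j) = j
  main_min : ∀ (j : ℕ) (i : Δ), blk i = j → main j ≤ i
  theta_no_last : ∀ i : Δ, i ≠ main (blk i) →
    ∃ i' : Δ, blk i' = blk i ∧ i' ≠ main (blk i) ∧ i < i'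
  deg_blk_eq : ∀ i i' : Δ, blk i = blk i' → (Q i).degree = (Q i').degree
  deg_blk_lt : ∀ i i' : Δ, blk i < blk i' → (Q i).degree < (Q i').degree
  degQ0 : (Q (main 0)).degree = 1

/-!
Put `γ = δ(Q)`. For a linear factor over `K̄` with `w̄(X - α) ≤ γ`, every Hasse-derivative
value `w̄(∂_b(X - α)) + bγ` is at least `w̄(X - α)`, and the last `b` with equality is `1` or `0`
according as `w̄(X - α) = γ` or not. By the Leibniz rule for `∂_b` these critical indices add up
under multiplication, so a polynomial `g` with `δ(g) ≤ γ` satisfies `w(g) = min_b (w(∂_b g) + bγ)`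
with critical index the number of roots where `w̄(X - α) = γ`. Thus `Q` has a positive index `c`,
while the coefficients of a `Q`-expansion have index `0` because `Q` is an abstract key polynomial;
the term `fᵢQⁱ` has index `ic`.

Summing the `Q`-expansion of `g`: if `δ(g) > γ`, the index `a > 0` of `g` for the slope `δ(g)` gives
`w_Q(g) ≤ w(∂_a g) + aγ < w(∂_a g) + aδ(g) = w(g)`; if `δ(g) ≤ γ`, then `b = i₀c`, for the last `i₀`
attaining `w_Q(g)`, gives `w(g) ≤ w(∂_b g) + bγ = w_Q(g)`. Hence `w_Q(g) < w(g) ↔ δ(Q) < δ(g)`, so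
`Φ(w_Q, w)` consists of the monic polynomials of least degree with `δ > δ(Q)`, which are abstract
key polynomials.
-/

namespace ValOn

variable {R : Type*} [CommRing R] [Nontrivial R] (W : ValOn R Γ)

theorem map_one : W.toFun 1 = 0 := by
  obtain ⟨a, ha⟩ := WithTop.ne_top_iff_exists.mp (W.ne_top' 1 one_ne_zero)
  have h := W.map_mul' 1 1
  rw [mul_one, ← ha, ← WithTop.coe_add, WithTop.coe_inj] at h
  rw [← ha, left_eq_add.mp h, WithTop.coe_zero]

def toAddValuation : AddValuation R (WithTop Γ) :=
  AddValuation.of W.toFun W.map_zero' W.map_one W.add_min' W.map_mul'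

end ValOn

namespace AddValuation

variable {R : Type*} [Ring R] (v : AddValuation R (WithTop Γ)) {ι : Type*} {s : Finset ι}
  {f : ι → R} {c : WithTop Γ} {e : Γ}

theorem le_map_sum_add (h : ∀ i ∈ s, c ≤ v (f i) + e) : c ≤ v (∑ i ∈ s, f i) + e :=
  Finset.sum_induction f (fun x => c ≤ v x + e)
    (fun x y hx hy => (le_min hx hy).trans <| by
      rw [min_add_add_right]; gcongr; exact v.map_add x y)
    (by simp) h

theorem lt_map_sum_add (hc : c ≠ ⊤) (h : ∀ i ∈ s, c < v (f i) + e) :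
    c < v (∑ i ∈ s, f i) + e :=
  Finset.sum_induction f (fun x => c < v x + e)
    (fun x y hx hy => (lt_min hx hy).trans_le <| by
      rw [min_add_add_right]; gcongr; exact v.map_add x y)
    (by simpa [lt_top_iff_ne_top]) h

theorem map_sum_add_eq [DecidableEq ι] {j : ι} (hj : j ∈ s) (hc : c ≠ ⊤)
    (hfj : v (f j) + e = c) (h : ∀ i ∈ s, i ≠ j → c < v (f i) + e) :
    v (∑ i ∈ s, f i) + e = c := by
  have hrest : c < v (∑ i ∈ s.erase j, f i) + e :=
    lt_map_sum_add v hc fun i hi => h i (Finset.mem_of_mem_erase hi) (Finset.ne_of_mem_erase hi)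
  rw [← hfj, WithTop.add_lt_add_iff_right WithTop.coe_ne_top] at hrest
  rw [← Finset.add_sum_erase s f hj, v.map_add_eq_of_lt_left hrest, hfj]

end AddValuation

theorem hasseDeriv_map {A B : Type*} [Semiring A] [Semiring B] (φ : A →+* B) (k : ℕ) (f : A[X]) :
    (hasseDeriv k f).map φ = hasseDeriv k (f.map φ) := by
  ext n
  simp only [coeff_map, hasseDeriv_coeff, map_mul, map_natCast]

structure HasseCritical {A : Type*} [CommRing A] (v : AddValuation A[X] (WithTop Γ)) (d : Γ)
    (a : ℕ) (f : A[X]) : Prop where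
  le : ∀ b : ℕ, v f ≤ v (hasseDeriv b f) + ((b • d : Γ) : WithTop Γ)
  eq : v (hasseDeriv a f) + ((a • d : Γ) : WithTop Γ) = v f
  lt : ∀ b : ℕ, a < b → v f < v (hasseDeriv b f) + ((b • d : Γ) : WithTop Γ)

namespace HasseCritical

open Finset

variable {A : Type*} [CommRing A] {v : AddValuation A[X] (WithTop Γ)} {d : Γ} {a a' : ℕ}
  {f g : A[X]}

theorem ne_top (h : HasseCritical v d a f) : v f ≠ ⊤ :=
  ne_top_of_lt (h.lt (a + 1) a.lt_succ_self)

theorem const {c : A} (hc : v (C c) ≠ ⊤) : HasseCritical v d 0 (C c) where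
  le b := by
    rcases b.eq_zero_or_pos with rfl | hb
    · simp
    · rw [hasseDeriv_C (k := b) c hb]
      simp
  eq := by simp
  lt b hb := by
    rw [hasseDeriv_C (k := b) c hb, AddValuation.map_zero, top_add]
    exact lt_top_iff_ne_top.mpr hc

theorem one : HasseCritical v d 0 1 := by
  simpa using const (v := v) (d := d) (c := 1) (by simp)

theorem mul (hf : HasseCritical v d a f) (hg : HasseCritical v d a' g) :
    HasseCritical v d (a + a') (f * g) := by
  have split : ∀ j k : ℕ, v (hasseDeriv j f * hasseDeriv k g) + (((j + k) • d : Γ) : WithTop Γ) =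
      (v (hasseDeriv j f) + ((j • d : Γ) : WithTop Γ)) +
        (v (hasseDeriv k g) + ((k • d : Γ) : WithTop Γ)) := by
    intro j k
    rw [AddValuation.map_mul v, add_nsmul, WithTop.coe_add, add_add_add_comm]
  have term_le : ∀ j k : ℕ, v f + v g ≤
      v (hasseDeriv j f * hasseDeriv k g) + (((j + k) • d : Γ) : WithTop Γ) := fun j k =>
    split j k ▸ add_le_add (hf.le j) (hg.le k)
  have term_lt : ∀ j k : ℕ, a < j ∨ a' < k → v f + v g <
      v (hasseDeriv j f * hasseDeriv k g) + (((j + k) • d : Γ) : WithTop Γ) := by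
    rintro j k (hj | hk) <;> rw [split]
    · exact (WithTop.add_lt_add_right hg.ne_top (hf.lt j hj)).trans_le (by gcongr; exact hg.le k)
    · exact (WithTop.add_lt_add_left hf.ne_top (hg.lt k hk)).trans_le (by gcongr; exact hf.le j)
  have hfin : v f + v g ≠ ⊤ := WithTop.add_ne_top.mpr ⟨hf.ne_top, hg.ne_top⟩
  refine ⟨fun b => ?_, ?_, fun b hb => ?_⟩ <;> rw [hasseDeriv_mul, AddValuation.map_mul v]
  · refine AddValuation.le_map_sum_add v fun p hp => ?_
    rw [← HasAntidiagonal.mem_antidiagonal.mp hp]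
    exact term_le p.1 p.2
  · refine AddValuation.map_sum_add_eq v (j := (a, a')) (HasAntidiagonal.mem_antidiagonal.mpr rfl)
      hfin (by rw [split a a', hf.eq, hg.eq]) ?_
    rintro ⟨j, k⟩ hjk hne
    replace hjk : j + k = a + a' := HasAntidiagonal.mem_antidiagonal.mp hjk
    rw [← hjk]
    refine term_lt j k ?_
    by_contra! hle
    exact hne (Prod.ext (by omega) (by omega))
  · refine AddValuation.lt_map_sum_add v hfin fun p hp => ?_
    rw [← HasAntidiagonal.mem_antidiagonal.mp hp] at hb ⊢
    exact term_lt p.1 p.2 (by omega)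

theorem pow (h : HasseCritical v d a f) (n : ℕ) : HasseCritical v d (n * a) (f ^ n) := by
  induction n with
  | zero => simpa using one
  | succ n ih => simpa [pow_succ, add_mul] using ih.mul h

theorem multiset_prod {ι : Type*} (s : Multiset ι) {F : ι → A[X]} {α : ι → ℕ}
    (h : ∀ i ∈ s, HasseCritical v d (α i) (F i)) :
    HasseCritical v d (s.map α).sum (s.map F).prod := by
  induction s using Multiset.induction_on with
  | empty => simpa using one
  | cons i s ih =>
    simpa using (h i (s.mem_cons_self i)).mul (ih fun j hj => h j (Multiset.mem_cons_of_mem hj))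

theorem X_sub_C {z : A} (h : v (X - C z) ≤ d) :
    HasseCritical v d (if v (X - C z) = d then 1 else 0) (X - C z) := by
  have hne : v (X - C z) ≠ ⊤ := ne_top_of_le_ne_top WithTop.coe_ne_top h
  have hder₁ : v (hasseDeriv 1 (X - C z)) + ((1 • d : Γ) : WithTop Γ) = d := by
    rw [hasseDeriv_one', derivative_X_sub_C, AddValuation.map_one, zero_add, one_nsmul]
  have hder₂ : ∀ b : ℕ, v (hasseDeriv (b + 2) (X - C z)) = ⊤ := fun b => by
    rw [map_sub, hasseDeriv_X (k := b + 2) (by omega), hasseDeriv_C (k := b + 2) z (by omega),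
      sub_zero, AddValuation.map_zero]
  have hle : ∀ b : ℕ, v (X - C z) ≤ v (hasseDeriv b (X - C z)) + ((b • d : Γ) : WithTop Γ)
    | 0 => by simp
    | 1 => by rwa [hder₁]
    | b + 2 => by rw [hder₂, top_add]; exact le_top
  have hlt : ∀ b : ℕ, 1 < b → v (X - C z) < v (hasseDeriv b (X - C z)) + ((b • d : Γ) : WithTop Γ)
    | b + 2, _ => by rw [hder₂, top_add]; exact lt_top_iff_ne_top.mpr hne
  split_ifs with hz
  · exact ⟨hle, by rw [hder₁, hz], hlt⟩
  · refine ⟨hle, by simp, fun b hb => ?_⟩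
    rcases (Nat.one_le_iff_ne_zero.mpr hb.ne').eq_or_lt with rfl | hb
    · rw [hder₁]
      exact h.lt_of_ne hz
    · exact hlt b hb

theorem of_splits {L : Type*} [Field L] {v : AddValuation L[X] (WithTop Γ)} {p : L[X]}
    (hp : p.Splits) (hlc : v (C p.leadingCoeff) ≠ ⊤) (hroots : ∀ x ∈ p.roots, v (X - C x) ≤ d) :
    HasseCritical v d (p.roots.map fun x => if v (X - C x) = d then 1 else 0).sum p := by
  have h := (const hlc).mul (multiset_prod p.roots fun x hx => X_sub_C (hroots x hx))
  rwa [zero_add, ← hp.eq_prod_roots] at h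

theorem of_map {B : Type*} [CommRing B] {φ : A →+* B} {v' : AddValuation B[X] (WithTop Γ)}
    (hv : ∀ f : A[X], v' (f.map φ) = v f) (h : HasseCritical v' d a (f.map φ)) : HasseCritical v d a f where
  le b := by simpa only [← hasseDeriv_map, hv] using h.le b
  eq := by simpa only [← hasseDeriv_map, hv] using h.eq
  lt b hb := by simpa only [← hasseDeriv_map, hv] using h.lt b hb

theorem inf_le_hasseDeriv_sum_add {ι : Type*} {s : Finset ι} {t : ι → A[X]} {α : ι → ℕ}
    (ht : ∀ i ∈ s, t i ≠ 0 → HasseCritical v d (α i) (t i)) (b : ℕ) :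
    s.inf (fun i => v (t i)) ≤ v (hasseDeriv b (∑ i ∈ s, t i)) + ((b • d : Γ) : WithTop Γ) := by
  rw [map_sum]
  refine AddValuation.le_map_sum_add v fun i hi => (Finset.inf_le hi).trans ?_
  rcases eq_or_ne (t i) 0 with h0 | h0
  · simp [h0]
  · exact (ht i hi h0).le b

theorem exists_hasseDeriv_sum_add_le_inf {s : Finset ℕ} {t : ℕ → A[X]} {c : ℕ} (hc : 0 < c)
    (ht : ∀ i ∈ s, t i ≠ 0 → HasseCritical v d (i * c) (t i)) :
    ∃ b : ℕ, v (hasseDeriv b (∑ i ∈ s, t i)) + ((b • d : Γ) : WithTop Γ) ≤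
      s.inf (fun i => v (t i)) := by
  classical
  set m := s.inf (fun i => v (t i)) with hm_def
  rcases eq_or_ne m ⊤ with hm | hm
  · exact ⟨0, hm ▸ le_top⟩
  have hsne : s.Nonempty := Finset.nonempty_iff_ne_empty.mpr fun h => hm (by simp [hm_def, h])
  obtain ⟨i, hi, hieq⟩ := Finset.exists_mem_eq_inf s hsne fun i => v (t i)
  -- `i₀` is the last index attaining `m`: at `b = i₀ * c` the later terms already exceed `m`,
  -- and the earlier ones have critical index `j * c < b`.
  set S := s.filter fun i => v (t i) = m
  have hS : S.Nonempty := ⟨i, Finset.mem_filter.mpr ⟨hi, hieq.symm⟩⟩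
  obtain ⟨hi₀s, hi₀m⟩ := Finset.mem_filter.mp (S.max'_mem hS)
  set i₀ := S.max' hS
  have hti₀ : t i₀ ≠ 0 := fun h0 => hm (by rw [← hi₀m, h0, AddValuation.map_zero])
  refine ⟨i₀ * c, ?_⟩
  rw [map_sum]
  refine (AddValuation.map_sum_add_eq v hi₀s hm ((ht i₀ hi₀s hti₀).eq.trans hi₀m)
    fun j hj hne => ?_).le
  rcases eq_or_ne (t j) 0 with h0 | h0
  · simpa [h0, lt_top_iff_ne_top] using hm
  rcases hne.lt_or_gt with hlt | hgt
  · exact (Finset.inf_le hj).trans_lt ((ht j hj h0).lt _ (Nat.mul_lt_mul_of_pos_right hlt hc))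
  · have hmj : m < v (t j) := (Finset.inf_le hj).lt_of_ne fun heq =>
      (S.le_max' j (Finset.mem_filter.mpr ⟨hj, heq.symm⟩)).not_gt hgt
    exact hmj.trans_le ((ht j hj h0).le _)

end HasseCritical

section Delta

variable {L : Type*} [Field L] [Algebra K L] (wbar : ValOn L[X] Γ) {f : K[X]}

theorem le_delta_of_mem_roots {x : L} (hx : x ∈ (f.map (algebraMap K L)).roots) :
    ((wbar.toFun (X - C x) : WithTop Γ) : WithBot (WithTop Γ)) ≤ delta wbar f :=
  Multiset.le_sup (Multiset.mem_map_of_mem _ hx)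

theorem delta_le_iff {c : WithTop Γ} :
    delta wbar f ≤ (c : WithBot (WithTop Γ)) ↔
      ∀ x ∈ (f.map (algebraMap K L)).roots, wbar.toFun (X - C x) ≤ c := by
  simp only [delta, Multiset.sup_le, Multiset.forall_mem_map_iff, WithBot.coe_le_coe]

theorem exists_mem_roots_delta_eq (hf : (f.map (algebraMap K L)).roots ≠ 0) :
    ∃ x ∈ (f.map (algebraMap K L)).roots,
      delta wbar f = ((wbar.toFun (X - C x) : WithTop Γ) : WithBot (WithTop Γ)) := by
  classical
  obtain ⟨x, hx, hmax⟩ := (f.map (algebraMap K L)).roots.toFinset.exists_max_image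
    (fun x => wbar.toFun (X - C x)) (Multiset.toFinset_nonempty.mpr hf)
  rw [Multiset.mem_toFinset] at hx
  refine ⟨x, hx, le_antisymm ((delta_le_iff wbar).mpr fun y hy => ?_)
    (le_delta_of_mem_roots wbar hx)⟩
  exact hmax y (Multiset.mem_toFinset.mpr hy)

theorem delta_lt_iff {c : WithTop Γ} :
    delta wbar f < (c : WithBot (WithTop Γ)) ↔
      ∀ x ∈ (f.map (algebraMap K L)).roots, wbar.toFun (X - C x) < c := by
  rcases eq_or_ne (f.map (algebraMap K L)).roots 0 with h | h
  · simp [delta, h, WithBot.bot_lt_coe]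
  obtain ⟨x, hx, hδ⟩ := exists_mem_roots_delta_eq wbar h
  refine ⟨fun hlt y hy => ?_, fun hall => ?_⟩
  · exact WithBot.coe_lt_coe.mp ((le_delta_of_mem_roots wbar hy).trans_lt hlt)
  · rw [hδ]
    exact WithBot.coe_lt_coe.mpr (hall x hx)

theorem exists_delta_eq_coe (hf : delta wbar f ≠ ⊥) :
    ∃ θ : Γ, delta wbar f = ((θ : WithTop Γ) : WithBot (WithTop Γ)) := by
  have hroots : (f.map (algebraMap K L)).roots ≠ 0 := fun h => hf (by simp [delta, h])
  obtain ⟨x, -, hδ⟩ := exists_mem_roots_delta_eq wbar hroots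
  obtain ⟨θ, hθ⟩ := WithTop.ne_top_iff_exists.mp (wbar.ne_top' _ (X_sub_C_ne_zero x))
  exact ⟨θ, by rw [hδ, hθ]⟩

theorem delta_ne_bot [IsAlgClosed L] (hf : 0 < f.natDegree) : delta wbar f ≠ ⊥ := by
  have hmap : f.map (algebraMap K L) ≠ 0 := Polynomial.map_ne_zero (ne_zero_of_natDegree_gt hf)
  obtain ⟨x, hx⟩ := IsAlgClosed.exists_root (f.map (algebraMap K L))
    (by rw [degree_map, degree_eq_natDegree (ne_zero_of_natDegree_gt hf)]; exact_mod_cast hf.ne')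
  exact ne_bot_of_le_ne_bot WithBot.coe_ne_bot
    (le_delta_of_mem_roots wbar ((mem_roots hmap).mpr hx))

theorem delta_mul_C {c : K} (hc : c ≠ 0) : delta wbar (f * C c) = delta wbar f := by
  rw [delta, delta, Polynomial.map_mul, map_C, mul_comm,
    roots_C_mul _ ((map_ne_zero_iff _ (algebraMap K L).injective).mpr hc)]

end Delta

section Expansion

variable {R : Type*} [CommRing R] [Nontrivial R] {Q : R[X]}

theorem divByMonic_pow_succ (hQ : Q.Monic) (f : R[X]) (k : ℕ) :
    f /ₘ Q ^ (k + 1) = (f /ₘ Q ^ k) /ₘ Q := by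
  have h₁ := modByMonic_add_div f (Q ^ k)
  have h₂ := modByMonic_add_div (f /ₘ Q ^ k) Q
  refine (div_modByMonic_unique _ (f %ₘ Q ^ k + (f /ₘ Q ^ k) %ₘ Q * Q ^ k) (hQ.pow (k + 1))
    ⟨by rw [pow_succ]; linear_combination h₁ + Q ^ k * h₂, ?_⟩).1
  have hdeg : ∀ n, (Q ^ n).degree = ((n * Q.natDegree : ℕ) : WithBot ℕ) := fun n => by
    rw [degree_eq_natDegree (hQ.pow n).ne_zero, hQ.natDegree_pow]
  refine (degree_add_le _ _).trans_lt (max_lt ?_ ?_)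
  · refine (degree_modByMonic_lt f (hQ.pow k)).trans_le ?_
    rw [hdeg, hdeg]
    exact_mod_cast Nat.mul_le_mul_right _ k.le_succ
  · rw [(hQ.pow k).degree_mul, pow_succ, hQ.degree_mul, add_comm]
    exact WithBot.add_lt_add_left (by rw [hdeg]; exact WithBot.coe_ne_bot)
      (degree_modByMonic_lt _ hQ)

theorem sum_range_modByMonic_mul_pow_add (hQ : Q.Monic) (f : R[X]) (k : ℕ) :
    ∑ i ∈ Finset.range k, (f /ₘ Q ^ i) %ₘ Q * Q ^ i + (f /ₘ Q ^ k) * Q ^ k = f := by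
  induction k with
  | zero => simp
  | succ k ih =>
    rw [Finset.sum_range_succ, divByMonic_pow_succ hQ, pow_succ]
    linear_combination ih + Q ^ k * modByMonic_add_div (f /ₘ Q ^ k) Q

theorem sum_modByMonic_mul_pow (hQ : Q.Monic) (hQdeg : 0 < Q.natDegree) (f : R[X]) :
    ∑ i ∈ Finset.range (f.natDegree + 1), (f /ₘ Q ^ i) %ₘ Q * Q ^ i = f := by
  have hlt : f.degree < (Q ^ (f.natDegree + 1)).degree := by
    rw [degree_eq_natDegree (hQ.pow _).ne_zero, hQ.natDegree_pow]
    exact degree_le_natDegree.trans_lt (by exact_mod_cast by nlinarith)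
  have h := sum_range_modByMonic_mul_pow_add hQ f (f.natDegree + 1)
  rwa [(divByMonic_eq_zero_iff (hQ.pow _)).mpr hlt, zero_mul, add_zero] at h

end Expansion

section KeyPolynomial

variable {L : Type*} [Field L] [Algebra K L] [IsAlgClosed L] {wbar : ValOn L[X] Γ}
  {w : ValOn K[X] Γ} {Q g : K[X]}

theorem exists_hasseCritical_of_delta_le
    (hw : ∀ f : K[X], wbar.toFun (f.map (algebraMap K L)) = w.toFun f) (hg : g ≠ 0) {γ : Γ}
    (hδ : delta wbar g ≤ ((γ : WithTop Γ) : WithBot (WithTop Γ))) :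
    ∃ a : ℕ, HasseCritical w.toAddValuation γ a g ∧
      (a = 0 ↔ delta wbar g < ((γ : WithTop Γ) : WithBot (WithTop Γ))) := by
  have hroots := (delta_le_iff wbar).mp hδ
  have hlc : wbar.toAddValuation (C (g.map (algebraMap K L)).leadingCoeff) ≠ ⊤ :=
    wbar.ne_top' _ (C_ne_zero.mpr (leadingCoeff_ne_zero.mpr (Polynomial.map_ne_zero hg)))
  refine ⟨_, HasseCritical.of_map (φ := algebraMap K L) hw
    (HasseCritical.of_splits (IsAlgClosed.splits _) hlc hroots), ?_⟩
  rw [Multiset.sum_eq_zero_iff, delta_lt_iff]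
  simp only [Multiset.mem_map, forall_exists_index, and_imp, forall_apply_eq_imp_iff₂]
  refine forall₂_congr fun x hx => ?_
  rw [ite_eq_right_iff, (hroots x hx).lt_iff_ne]
  simp only [one_ne_zero, imp_false]
  rfl

theorem hasseCritical_modByMonic_mul_pow
    (hw : ∀ f : K[X], wbar.toFun (f.map (algebraMap K L)) = w.toFun f) (hQ : IsABKP wbar Q)
    {γ : Γ} (hγ : delta wbar Q = ((γ : WithTop Γ) : WithBot (WithTop Γ))) {c : ℕ}
    (hc : HasseCritical w.toAddValuation γ c Q) (i : ℕ)
    (hi : (g /ₘ Q ^ i) %ₘ Q * Q ^ i ≠ 0) :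
    HasseCritical w.toAddValuation γ (i * c) ((g /ₘ Q ^ i) %ₘ Q * Q ^ i) := by
  have hr : (g /ₘ Q ^ i) %ₘ Q ≠ 0 := left_ne_zero_of_mul hi
  have hδ := hQ.2 _ hr (degree_modByMonic_lt _ hQ.1)
  rw [hγ] at hδ
  obtain ⟨a, ha, ha_iff⟩ := exists_hasseCritical_of_delta_le hw hr hδ.le
  simpa [ha_iff.mpr hδ] using ha.mul (hc.pow i)

theorem truncVal_lt_iff_delta_lt
    (hw : ∀ f : K[X], wbar.toFun (f.map (algebraMap K L)) = w.toFun f) (hQ : IsABKP wbar Q)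
    (hQdeg : 0 < Q.natDegree) (hg : g ≠ 0) :
    truncVal w Q g < w.toFun g ↔ delta wbar Q < delta wbar g := by
  obtain ⟨γ, hγ⟩ := exists_delta_eq_coe wbar (delta_ne_bot wbar hQdeg)
  obtain ⟨c, hc, hc_iff⟩ := exists_hasseCritical_of_delta_le hw hQ.1.ne_zero hγ.le
  have hc0 : c ≠ 0 := fun h => (hc_iff.mp h).ne hγ
  have hterms : ∀ i ∈ Finset.range (g.natDegree + 1), (g /ₘ Q ^ i) %ₘ Q * Q ^ i ≠ 0 →
      HasseCritical w.toAddValuation γ (i * c) ((g /ₘ Q ^ i) %ₘ Q * Q ^ i) :=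
    fun i _ => hasseCritical_modByMonic_mul_pow hw hQ hγ hc i
  have hsum := sum_modByMonic_mul_pow hQ.1 hQdeg g
  constructor
  · intro hlt
    by_contra! hle
    rw [hγ] at hle
    obtain ⟨a, ha, -⟩ := exists_hasseCritical_of_delta_le hw hg hle
    obtain ⟨b, hb⟩ := HasseCritical.exists_hasseDeriv_sum_add_le_inf (Nat.pos_of_ne_zero hc0) hterms
    rw [hsum] at hb
    exact (ha.le b |>.trans hb).not_gt hlt
  · intro hlt
    obtain ⟨θ, hθ⟩ := exists_delta_eq_coe wbar (ne_bot_of_gt hlt)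
    obtain ⟨a, ha, ha_iff⟩ := exists_hasseCritical_of_delta_le hw hg hθ.le
    have ha0 : a ≠ 0 := fun h => (ha_iff.mp h).ne hθ
    have hγθ : γ < θ := by
      rw [hγ, hθ] at hlt
      exact WithTop.coe_lt_coe.mp (WithBot.coe_lt_coe.mp hlt)
    have hfin : w.toAddValuation (hasseDeriv a g) ≠ ⊤ := fun h =>
      ha.ne_top (by rw [← ha.eq, h, top_add])
    calc truncVal w Q g
        ≤ w.toAddValuation (hasseDeriv a g) + ((a • γ : Γ) : WithTop Γ) := by
          have h := HasseCritical.inf_le_hasseDeriv_sum_add hterms a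
          rwa [hsum] at h
      _ < w.toAddValuation (hasseDeriv a g) + ((a • θ : Γ) : WithTop Γ) :=
          WithTop.add_lt_add_left hfin (WithTop.coe_lt_coe.mpr (nsmul_lt_nsmul_right ha0 hγθ))
      _ = w.toFun g := ha.eq

theorem natDegree_pos_of_truncVal_lt (hQ : Q.Monic) {f : K[X]} (hf : truncVal w Q f < w.toFun f) :
    0 < Q.natDegree := by
  refine Nat.pos_of_ne_zero fun h => hf.ne_top ?_
  simp [truncVal, hQ.natDegree_eq_zero.mp h, w.map_zero']

end KeyPolynomial

theorem abkp_of_inPhi_trunc_general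
    {K : Type*} [Field K] {Γ : Type*} [AddCommGroup Γ] [LinearOrder Γ] [IsOrderedAddMonoid Γ]
    {L : Type*} [Field L] [Algebra K L] [IsAlgClosure K L]
    (vbar : ValOn L Γ)
    (w : ValOn (Polynomial K) Γ)
    (wbar : ValOn (Polynomial L) Γ) (hcomm : IsCommonExt wbar w vbar)
    (Q : Polynomial K) (hQ : IsABKP wbar Q)
    (hlt : FnLt (truncVal w Q) w.toFun)
    (F : Polynomial K) (hF : InPhi (truncVal w Q) w.toFun F) :
    IsABKP wbar F ∧ delta wbar Q < delta wbar F := by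
  have : IsAlgClosed L := IsAlgClosure.isAlgClosed K
  obtain ⟨f₀, hf₀⟩ := hlt.2
  have hQdeg := natDegree_pos_of_truncVal_lt hQ.1 hf₀
  have key := fun {g : K[X]} (hg : g ≠ 0) => truncVal_lt_iff_delta_lt hcomm.1 hQ hQdeg hg
  have hδF : delta wbar Q < delta wbar F := (key hF.1.ne_zero).mp hF.2.1
  refine ⟨⟨hF.1, fun f hf hdeg => ?_⟩, hδF⟩
  have hmonic := monic_mul_leadingCoeff_inv hf
  calc delta wbar f = delta wbar (f * C f.leadingCoeff⁻¹) :=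
        (delta_mul_C wbar (inv_ne_zero (leadingCoeff_ne_zero.mpr hf))).symm
    _ ≤ delta wbar Q := not_lt.mp fun hlt' =>
        (hF.2.2 _ hmonic ((key hmonic.ne_zero).mpr hlt')).not_gt
          (by rwa [degree_mul_leadingCoeff_inv f hf])
    _ < delta wbar F := hδF

/-- if `Q` is an abstract key polynomial for `w` with `w_Q < w`, then
every `F ∈ Φ(w_Q, w)` is an abstract key polynomial for `w` and `δ(Q) < δ(F)`. -/
theorem abkp_of_inPhi_trunc
    {K : Type*} [Field K] {Γ : Type*} [AddCommGroup Γ] [LinearOrder Γ] [IsOrderedAddMonoid Γ]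
    {L : Type*} [Field L] [Algebra K L] [IsAlgClosure K L]
    (v : ValOn K Γ) (vbar : ValOn L Γ)
    (hvbar : ∀ c : K, vbar.toFun (algebraMap K L c) = v.toFun c)
    (w : ValOn (Polynomial K) Γ) (hext : Extends w v)
    (wbar : ValOn (Polynomial L) Γ) (hcomm : IsCommonExt wbar w vbar)
    (Q : Polynomial K) (hQ : IsABKP wbar Q)
    (hlt : FnLt (truncVal w Q) w.toFun)
    (F : Polynomial K) (hF : InPhi (truncVal w Q) w.toFun F) :
    IsABKP wbar F ∧ delta wbar Q < delta wbar F :=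
  abkp_of_inPhi_trunc_general vbar w wbar hcomm Q hQ hlt F hF

end MLV
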